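/- arXiv:1610.05901 — 7 statements merged into one kernel-verified Lean document; each statement's English description precedes it below -/
import Mathlib

section
/- Let π : [0,L] → ℝ^d be a continuous curve parametrized by arc length (i.e., 1-Lipschitz) with π(0) = 0 and ‖π(L)‖ = r, where r ≥ 20ρ and ρ > 0. Set k = ⌈r/(20ρ)⌉. Then there exists a sequence 0 = t(0) ≤ t(1) ≤ ⋯ ≤ t(k) ≤ L such that (1) for any distinct j, j' ∈ {0,…,k}, ‖π(t(j)) − π(t(j'))‖ ≥ 10ρ, and (2) for any j ∈ {1,…,k}, ‖π(t(j)) − π(t(j−1))‖ ≤ 10ρ. -/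
open Set

/-! Walk greedily along the curve, with `δ = 10ρ`: from the current time `a`, jump to the last
time at which the curve is still within `δ` of `π a`. Consecutive points are then at distance
at most `δ`, and by continuity exactly `δ` unless the jump lands on the endpoint `L`; every
later point is farther than `δ` away, by maximality of the jump. Each jump moves `π` by at most
`δ`, so the walk cannot reach `L` before step `n` with `n δ ≥ r`, and `⌈r / (2δ)⌉₊ δ ≤ r`. -/

section Skeleton

variable {X : Type*} [PseudoMetricSpace X] (γ : ℝ → X) (L δ : ℝ) {a s : ℝ}

noncomputable def lastTimeWithin (a : ℝ) : ℝ :=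
  sSup {s ∈ Icc a L | dist (γ s) (γ a) ≤ δ}

variable {γ L δ}

theorem le_lastTimeWithin (hs : s ∈ Icc a L) (h : dist (γ s) (γ a) ≤ δ) :
    s ≤ lastTimeWithin γ L δ a :=
  le_csSup ⟨L, fun _ hs => hs.1.2⟩ ⟨hs, h⟩

theorem lastTimeWithin_mem (hγ : ContinuousOn γ (Icc a L)) (ha : a ≤ L) (hδ : 0 ≤ δ) :
    lastTimeWithin γ L δ a ∈ {s ∈ Icc a L | dist (γ s) (γ a) ≤ δ} :=
  IsClosed.csSup_mem
    ((continuous_dist.comp_continuousOn (hγ.prodMk continuousOn_const))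
      |>.preimage_isClosed_of_isClosed isClosed_Icc isClosed_Iic)
    ⟨a, ⟨le_rfl, ha⟩, by simpa using hδ⟩ ⟨L, fun _ hs => hs.1.2⟩

theorem lt_dist_of_lastTimeWithin_lt (hs : s ∈ Icc a L) (hlt : lastTimeWithin γ L δ a < s) :
    δ < dist (γ s) (γ a) :=
  lt_of_not_ge fun h => (le_lastTimeWithin hs h).not_gt hlt

theorem le_dist_lastTimeWithin (hγ : ContinuousOn γ (Icc a L)) (ha : a ≤ L) (hδ : 0 ≤ δ)
    (hlt : lastTimeWithin γ L δ a < L) :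
    δ ≤ dist (γ (lastTimeWithin γ L δ a)) (γ a) := by
  set b := lastTimeWithin γ L δ a
  have hb : b ∈ Icc a L := (lastTimeWithin_mem hγ ha hδ).1
  have hsub : Ioc b L ⊆ Icc a L := fun s hs => ⟨hb.1.trans hs.1.le, hs.2⟩
  refine ContinuousWithinAt.closure_le (f := fun _ => δ) (g := fun s => dist (γ s) (γ a))
    (by rw [closure_Ioc hlt.ne]; exact ⟨le_rfl, hlt.le⟩) continuousWithinAt_const
    (((hγ b hb).mono hsub).dist tendsto_const_nhds)
    fun s hs => (lt_dist_of_lastTimeWithin_lt (hsub hs) hs.1).le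

theorem lt_lastTimeWithin (hγ : ContinuousOn γ (Icc a L)) (ha : a < L) (hδ : 0 < δ) :
    a < lastTimeWithin γ L δ a := by
  have hmem := lastTimeWithin_mem hγ ha.le hδ.le
  refine hmem.1.1.lt_of_ne fun h => ?_
  have := le_dist_lastTimeWithin hγ ha.le hδ.le (h ▸ ha)
  rw [← h, dist_self] at this
  exact this.not_gt hδ

variable (γ L δ)

noncomputable def skeleton (a : ℝ) (n : ℕ) : ℝ := (lastTimeWithin γ L δ)^[n] a

@[simp]
theorem skeleton_zero : skeleton γ L δ a 0 = a := rfl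

theorem skeleton_succ (n : ℕ) :
    skeleton γ L δ a (n + 1) = lastTimeWithin γ L δ (skeleton γ L δ a n) :=
  Function.iterate_succ_apply' _ n a

variable {γ L δ}

theorem skeleton_mem_Icc (hγ : ContinuousOn γ (Icc a L)) (ha : a ≤ L) (hδ : 0 ≤ δ) (n : ℕ) :
    skeleton γ L δ a n ∈ Icc a L := by
  induction n with
  | zero => exact ⟨le_rfl, ha⟩
  | succ n ih =>
    have h := lastTimeWithin_mem (hγ.mono (Icc_subset_Icc ih.1 le_rfl)) ih.2 hδ
    rw [skeleton_succ]
    exact ⟨ih.1.trans h.1.1, h.1.2⟩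

theorem skeleton_succ_mem (hγ : ContinuousOn γ (Icc a L)) (ha : a ≤ L) (hδ : 0 ≤ δ) (n : ℕ) :
    skeleton γ L δ a (n + 1) ∈
      {s ∈ Icc (skeleton γ L δ a n) L | dist (γ s) (γ (skeleton γ L δ a n)) ≤ δ} := by
  have hn := skeleton_mem_Icc hγ ha hδ n
  rw [skeleton_succ]
  exact lastTimeWithin_mem (hγ.mono (Icc_subset_Icc hn.1 le_rfl)) hn.2 hδ

theorem monotone_skeleton (hγ : ContinuousOn γ (Icc a L)) (ha : a ≤ L) (hδ : 0 ≤ δ) :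
    Monotone (skeleton γ L δ a) :=
  monotone_nat_of_le_succ fun n => (skeleton_succ_mem hγ ha hδ n).1.1

theorem dist_skeleton_le (hγ : ContinuousOn γ (Icc a L)) (ha : a ≤ L) (hδ : 0 ≤ δ) (n : ℕ) :
    dist (γ (skeleton γ L δ a n)) (γ a) ≤ n * δ := by
  induction n with
  | zero => simp
  | succ n ih =>
    calc dist (γ (skeleton γ L δ a (n + 1))) (γ a)
        ≤ dist (γ (skeleton γ L δ a (n + 1))) (γ (skeleton γ L δ a n))
          + dist (γ (skeleton γ L δ a n)) (γ a) := dist_triangle _ _ _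
      _ ≤ δ + n * δ := add_le_add (skeleton_succ_mem hγ ha hδ n).2 ih
      _ = (n + 1 : ℕ) * δ := by push_cast; ring

theorem skeleton_lt_of_mul_lt (hγ : ContinuousOn γ (Icc a L)) (ha : a ≤ L) (hδ : 0 ≤ δ)
    {n : ℕ} (hn : n * δ < dist (γ L) (γ a)) : skeleton γ L δ a n < L := by
  refine (skeleton_mem_Icc hγ ha hδ n).2.lt_of_ne fun h => ?_
  have := dist_skeleton_le hγ ha hδ n
  rw [h] at this
  exact this.not_gt hn

theorem le_dist_skeleton_succ (hγ : ContinuousOn γ (Icc a L)) (ha : a ≤ L) (hδ : 0 ≤ δ)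
    {n : ℕ} (hn : (n + 1 : ℕ) * δ ≤ dist (γ L) (γ a)) :
    δ ≤ dist (γ (skeleton γ L δ a (n + 1))) (γ (skeleton γ L δ a n)) := by
  have hn_mem := skeleton_mem_Icc hγ ha hδ n
  rcases (skeleton_mem_Icc hγ ha hδ (n + 1)).2.lt_or_eq with hlt | heq
  · rw [skeleton_succ] at hlt ⊢
    exact le_dist_lastTimeWithin (hγ.mono (Icc_subset_Icc hn_mem.1 le_rfl)) hn_mem.2 hδ hlt
  · rw [heq]
    have := dist_skeleton_le hγ ha hδ n
    have := dist_triangle (γ L) (γ (skeleton γ L δ a n)) (γ a)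
    push_cast at hn
    linarith

theorem lt_dist_skeleton (hγ : ContinuousOn γ (Icc a L)) (ha : a ≤ L) (hδ : 0 < δ)
    {i j : ℕ} (hij : i + 2 ≤ j) (hi : (i + 2 : ℕ) * δ ≤ dist (γ L) (γ a)) :
    δ < dist (γ (skeleton γ L δ a j)) (γ (skeleton γ L δ a i)) := by
  have hlt : skeleton γ L δ a (i + 1) < L := by
    refine skeleton_lt_of_mul_lt hγ ha hδ.le (lt_of_lt_of_le ?_ hi)
    gcongr; omega
  have hjump : skeleton γ L δ a (i + 1) < skeleton γ L δ a j := by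
    have hi1 := skeleton_mem_Icc hγ ha hδ.le (i + 1)
    calc skeleton γ L δ a (i + 1)
        < lastTimeWithin γ L δ (skeleton γ L δ a (i + 1)) :=
          lt_lastTimeWithin (hγ.mono (Icc_subset_Icc hi1.1 le_rfl)) hlt hδ
      _ = skeleton γ L δ a (i + 2) := (skeleton_succ ..).symm
      _ ≤ skeleton γ L δ a j := monotone_skeleton hγ ha hδ.le hij
  rw [skeleton_succ] at hjump
  exact lt_dist_of_lastTimeWithin_lt
    ⟨monotone_skeleton hγ ha hδ.le (by omega), (skeleton_mem_Icc hγ ha hδ.le j).2⟩ hjump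

theorem le_dist_skeleton (hγ : ContinuousOn γ (Icc a L)) (ha : a ≤ L) (hδ : 0 < δ)
    {i j : ℕ} (hij : i < j) (hj : j * δ ≤ dist (γ L) (γ a)) :
    δ ≤ dist (γ (skeleton γ L δ a j)) (γ (skeleton γ L δ a i)) := by
  obtain rfl | hlt := (Nat.succ_le_of_lt hij).eq_or_lt
  · exact le_dist_skeleton_succ hγ ha hδ.le hj
  · exact (lt_dist_skeleton hγ ha hδ hlt (le_trans (by gcongr; omega) hj)).le

end Skeleton

theorem natCeil_div_two_mul_le {c r : ℝ} (hc : 0 < c) (hr : 2 * c ≤ r) :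
    ⌈r / (2 * c)⌉₊ * c ≤ r := by
  have hceil := Nat.ceil_lt_add_one (div_nonneg (hc.le.trans (by linarith)) (by positivity) :
    (0 : ℝ) ≤ r / (2 * c))
  calc ⌈r / (2 * c)⌉₊ * c ≤ (r / (2 * c) + 1) * c := by gcongr
    _ = r / 2 + c := by field_simp
    _ ≤ r := by linarith

/-- The skeleton lemma: from a continuous curve `π : [0,L] → ℝ^d` with `π 0 = 0` and
`‖π L‖ = r`, `r ≥ 20ρ`, one can extract `k+1 = ⌈r/(20ρ)⌉+1` points along the curve that are
pairwise `10ρ`-separated, with consecutive points at distance at most `10ρ`. -/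
theorem skeleton_lemma {d : ℕ} (ρ r L : ℝ) (hρ : 0 < ρ) (hr : 20 * ρ ≤ r) (hL : 0 ≤ L)
    (π : ℝ → EuclideanSpace ℝ (Fin d))
    (hcont : ContinuousOn π (Icc 0 L))
    (h0 : π 0 = 0) (hend : ‖π L‖ = r) :
    ∃ t : ℕ → ℝ,
      t 0 = 0 ∧
      (∀ j, j < ⌈r / (20 * ρ)⌉₊ → t j ≤ t (j + 1)) ∧
      (∀ j, j ≤ ⌈r / (20 * ρ)⌉₊ → t j ∈ Icc 0 L) ∧
      (∀ j j', j ≤ ⌈r / (20 * ρ)⌉₊ → j' ≤ ⌈r / (20 * ρ)⌉₊ → j ≠ j' →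
        10 * ρ ≤ ‖π (t j) - π (t j')‖) ∧
      (∀ j, 1 ≤ j → j ≤ ⌈r / (20 * ρ)⌉₊ → ‖π (t j) - π (t (j - 1))‖ ≤ 10 * ρ) := by
  have hδ : 0 < 10 * ρ := by positivity
  have hk : ⌈r / (20 * ρ)⌉₊ * (10 * ρ) ≤ dist (π L) (π 0) := by
    rw [dist_eq_norm, h0, sub_zero, hend, show 20 * ρ = 2 * (10 * ρ) by ring]
    exact natCeil_div_two_mul_le hδ (by linarith)
  have hsep {i j : ℕ} (hij : i < j) (hj : j ≤ ⌈r / (20 * ρ)⌉₊) :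
      10 * ρ ≤ ‖π (skeleton π L (10 * ρ) 0 j) - π (skeleton π L (10 * ρ) 0 i)‖ := by
    rw [← dist_eq_norm]
    exact le_dist_skeleton hcont hL hδ hij (le_trans (by gcongr) hk)
  refine ⟨skeleton π L (10 * ρ) 0, rfl, fun j _ => monotone_skeleton hcont hL hδ.le j.le_succ,
    fun j _ => skeleton_mem_Icc hcont hL hδ.le j, fun j j' hj hj' hne => ?_, fun j hj _ => ?_⟩
  · rcases hne.lt_or_gt with h | h
    · rw [norm_sub_rev]
      exact hsep h hj'
    · exact hsep h hj
  · obtain ⟨i, rfl⟩ : ∃ i, j = i + 1 := ⟨j - 1, by omega⟩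
    rw [Nat.add_sub_cancel, ← dist_eq_norm]
    exact (skeleton_succ_mem hcont hL hδ.le i).2
end

section
/- Let π : [0,L] → ℝ^d be a 1-Lipschitz curve, let ρ > 0, and let t(j), j ∈ {0,…,k}, be times such that ‖π(t(j)) − π(t(j'))‖ ≥ 10ρ for distinct j, j'. Let B = B(c,R) be a ball with R ≥ ρ such that π^{-1}(B) is contained in an interval of length at most 3R. Then the number of indices j such that there exists t ∈ π^{-1}(B(π(t(j)),3ρ)) with π(t) ∈ B is at most 2R/ρ. -/
open Set Metric

/-- Lemma 3 of the paper: a ball `B(c,R)` with `R ≥ ρ` whose preimage under the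
`1`-Lipschitz curve `π` is contained in an interval of length `3R` can disturb at most
`2R/ρ` of the `3ρ`-neighborhoods of the skeleton points `π (t j)`. -/
theorem disturbing_ball_count {d : ℕ} (k : ℕ) (ρ R L : ℝ) (hρ : 0 < ρ) (hR : ρ ≤ R)
    (hL : 0 ≤ L) (π : ℝ → EuclideanSpace ℝ (Fin d))
    (hLip : LipschitzOnWith 1 π (Icc 0 L))
    (t : ℕ → ℝ) (ht : ∀ j, j ≤ k → t j ∈ Icc 0 L)
    (hsep : ∀ j j', j ≤ k → j' ≤ k → j ≠ j' → 10 * ρ ≤ ‖π (t j) - π (t j')‖)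
    (c : EuclideanSpace ℝ (Fin d)) (a : ℝ)
    (hpre : ∀ s ∈ Icc (0 : ℝ) L, π s ∈ ball c R → s ∈ Icc a (a + 3 * R)) :
    ({j : ℕ | j ≤ k ∧ ∃ s ∈ Icc (0 : ℝ) L,
        π s ∈ ball (π (t j)) (3 * ρ) ∧ π s ∈ ball c R}.ncard : ℝ) ≤ 2 * R / ρ := by
  classical
  set S : Set ℕ := {j : ℕ | j ≤ k ∧ ∃ s ∈ Icc (0 : ℝ) L,
      π s ∈ ball (π (t j)) (3 * ρ) ∧ π s ∈ ball c R} with hS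
  have hRpos : (0 : ℝ) < R := lt_of_lt_of_le hρ hR
  -- choice of witness times
  let σ : ℕ → ℝ := fun j => if h : j ∈ S then h.2.choose else 0
  have hσ : ∀ j (h : j ∈ S), σ j ∈ Icc (0 : ℝ) L ∧
      π (σ j) ∈ ball (π (t j)) (3 * ρ) ∧ π (σ j) ∈ ball c R := by
    intro j h
    simp only [σ, dif_pos h]
    exact h.2.choose_spec
  have hσIcc : ∀ j (h : j ∈ S), σ j ∈ Icc a (a + 3 * R) := fun j h =>
    hpre _ (hσ j h).1 (hσ j h).2.2
  set N : ℤ := ⌊3 * R / (4 * ρ)⌋ with hN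
  have h4ρ : (0 : ℝ) < 4 * ρ := by linarith
  let f : ℕ → ℤ := fun j => ⌊(σ j - a) / (4 * ρ)⌋
  have hinj : Set.InjOn f S := by
    intro j hj j' hj' hff
    by_contra hne
    have hclose : |(σ j - a) / (4 * ρ) - (σ j' - a) / (4 * ρ)| < 1 :=
      Int.abs_sub_lt_one_of_floor_eq_floor hff
    have hdist : |σ j - σ j'| < 4 * ρ := by
      rw [div_sub_div_same, abs_div, abs_of_pos h4ρ, div_lt_one h4ρ] at hclose
      have : σ j - a - (σ j' - a) = σ j - σ j' := by ring
      rwa [this] at hclose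
    have hlip : ‖π (σ j) - π (σ j')‖ ≤ |σ j - σ j'| := by
      have := hLip.dist_le_mul (σ j) (hσ j hj).1 (σ j') (hσ j' hj').1
      simpa [dist_eq_norm, Real.dist_eq] using this
    have h1 : ‖π (σ j) - π (t j)‖ < 3 * ρ := by
      have := (hσ j hj).2.1
      rwa [mem_ball, dist_eq_norm] at this
    have h2 : ‖π (σ j') - π (t j')‖ < 3 * ρ := by
      have := (hσ j' hj').2.1
      rwa [mem_ball, dist_eq_norm] at this
    have hsep' := hsep j j' hj.1 hj'.1 hne
    have htri : ‖π (t j) - π (t j')‖ ≤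
        ‖π (t j) - π (σ j)‖ + ‖π (σ j) - π (σ j')‖ + ‖π (σ j') - π (t j')‖ :=
      norm_sub_le_norm_sub_add_norm_sub _ _ _ |>.trans <| by
        gcongr
        exact norm_sub_le_norm_sub_add_norm_sub _ _ _
    have h1' : ‖π (t j) - π (σ j)‖ < 3 * ρ := by rwa [norm_sub_rev] at h1
    linarith [lt_of_le_of_lt hlip hdist]
  have hsub : f '' S ⊆ Set.Icc (0 : ℤ) N := by
    rintro _ ⟨j, hj, rfl⟩
    have hI := hσIcc j hj
    constructor
    · apply Int.le_floor.mpr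
      push_cast
      apply div_nonneg _ (le_of_lt h4ρ)
      linarith [hI.1]
    · apply Int.floor_le_floor
      gcongr
      linarith [hI.2]
  have hfin : S.Finite := (Set.finite_Iic k).subset (fun j hj => hj.1)
  have h1 : S.ncard = (f '' S).ncard := (Set.ncard_image_of_injOn hinj).symm
  have h2 : (f '' S).ncard ≤ (Set.Icc (0 : ℤ) N).ncard :=
    Set.ncard_le_ncard hsub (Set.finite_Icc _ _)
  have h3 : (Set.Icc (0 : ℤ) N).ncard = (N + 1).toNat := by
    rw [← Finset.coe_Icc, Set.ncard_coe_finset, Int.card_Icc]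
    omega
  have hN0 : (0 : ℤ) ≤ N := Int.floor_nonneg.mpr (by positivity)
  have hcast : (((N + 1).toNat : ℤ) : ℝ) = (N : ℝ) + 1 := by
    rw [Int.toNat_of_nonneg (by linarith)]
    push_cast; ring
  have hfloor : (N : ℝ) ≤ 3 * R / (4 * ρ) := Int.floor_le _
  have hx : (1 : ℝ) ≤ R / ρ := (one_le_div hρ).mpr hR
  have e1 : 3 * R / (4 * ρ) = 3 / 4 * (R / ρ) := by field_simp
  have e2 : 2 * R / ρ = 2 * (R / ρ) := by ring
  have : (S.ncard : ℝ) ≤ (N : ℝ) + 1 := by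
    rw [h1]
    calc ((f '' S).ncard : ℝ) ≤ ((Set.Icc (0 : ℤ) N).ncard : ℝ) := by exact_mod_cast h2
      _ = (N : ℝ) + 1 := by rw [h3]; exact_mod_cast hcast
  linarith
end

section
/- Let K ≥ 1 be a natural number, κ > 0 and ε ∈ [0,1] real numbers such that K·exp(−κ/2) + K·exp(κ/2)·ε ≤ 1/2. Let k ≥ 1 and let Z_0,…,Z_{k−1} be i.i.d. Bernoulli random variables with P(Z_j = 1) = 1 − ε. Then K^{k−1}·P(Σ_{j=0}^{k−1} Z_j ≤ k/2) ≤ 2^{−k} ≤ 1/2. -/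
open MeasureTheory ProbabilityTheory Finset

/-- The Chernoff-type estimate of the good-sites lemma: if `K e^{-κ/2} + K e^{κ/2} ε ≤ 1/2`
and `Z_0, …, Z_{k-1}` are i.i.d. Bernoulli of parameter `1 - ε`, then
`K^{k-1} P(∑ Z_j ≤ k/2) ≤ 2^{-k} ≤ 1/2`. -/
theorem chernoff_good_sites {Ω : Type*} [MeasurableSpace Ω]
    (P : Measure Ω) [IsProbabilityMeasure P]
    (K : ℕ) (hK : 1 ≤ K) (κ ε : ℝ) (hκ : 0 < κ) (hε : ε ∈ Set.Icc (0 : ℝ) 1)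
    (hineq : (K : ℝ) * Real.exp (-κ / 2) + (K : ℝ) * Real.exp (κ / 2) * ε ≤ 1 / 2)
    (k : ℕ) (hk : 1 ≤ k)
    (Z : ℕ → Ω → ℝ) (hmeas : ∀ j, Measurable (Z j))
    (hindep : iIndepFun Z P)
    (hval : ∀ j, ∀ ω, Z j ω = 0 ∨ Z j ω = 1)
    (hdist : ∀ j, P {ω | Z j ω = 1} = ENNReal.ofReal (1 - ε)) :
    (K : ℝ) ^ (k - 1) *
        (P {ω | ∑ j ∈ Finset.range k, Z j ω ≤ (k : ℝ) / 2}).toReal ≤ 2 ^ (-(k : ℝ)) ∧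
      (2 : ℝ) ^ (-(k : ℝ)) ≤ 1 / 2 := by
  obtain ⟨hε0, hε1⟩ := hε
  have ht : -κ ≤ 0 := by linarith
  -- each Z j is nonnegative
  have hZnn : ∀ j ω, 0 ≤ Z j ω := by
    intro j ω; rcases hval j ω with h | h <;> simp [h]
  -- integral of Z j
  have hintZ : ∀ j, ∫ ω, Z j ω ∂P = 1 - ε := by
    intro j
    have hset : MeasurableSet {ω | Z j ω = 1} := (hmeas j) (measurableSet_singleton 1)
    have hfun : Z j = Set.indicator {ω | Z j ω = 1} (fun _ => (1 : ℝ)) := by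
      funext ω
      rcases hval j ω with h | h
      · rw [h, Set.indicator_apply_eq_zero.2]
        intro hmem; simp only [Set.mem_setOf_eq] at hmem; rw [h] at hmem; norm_num at hmem
      · rw [h]; exact (Set.indicator_of_mem (show ω ∈ {ω | Z j ω = 1} from h) (fun _ => (1 : ℝ))).symm
    rw [hfun]
    rw [show (Set.indicator {ω | Z j ω = 1} (fun _ => (1 : ℝ)))
        = Set.indicator {ω | Z j ω = 1} 1 from rfl]
    rw [integral_indicator_one hset, measureReal_def, hdist j, ENNReal.toReal_ofReal (by linarith)]
  -- mgf of each Z j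
  set a : ℝ := (1 - ε) * Real.exp (-κ) + ε with ha_def
  have ha_nn : 0 ≤ a := by
    have h0 : 0 ≤ (1 - ε) * Real.exp (-κ) := mul_nonneg (by linarith) (Real.exp_pos (-κ)).le
    rw [ha_def]; linarith
  have hmgf : ∀ j, mgf (Z j) P (-κ) = a := by
    intro j
    have hfun : ∀ ω, Real.exp (-κ * Z j ω) = 1 + (Real.exp (-κ) - 1) * Z j ω := by
      intro ω
      rcases hval j ω with h | h <;> simp [h]
    unfold mgf
    simp only [hfun]
    have hintegZ : Integrable (Z j) P := by
      refine ⟨(hmeas j).aestronglyMeasurable, HasFiniteIntegral.of_bounded (C := 1) ?_⟩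
      filter_upwards with ω
      rcases hval j ω with h | h <;> simp [h]
    rw [integral_add (integrable_const 1) (hintegZ.const_mul _), integral_const,
      integral_const_mul, hintZ j]
    simp [ha_def]; ring
  -- integrability of exp(t * sum)
  have hSmeas : Measurable (∑ j ∈ Finset.range k, Z j) := by
    have heq : (∑ j ∈ Finset.range k, Z j) = fun ω => ∑ j ∈ Finset.range k, Z j ω := by
      funext ω; simp
    rw [heq]; exact Finset.measurable_sum _ fun j _ => hmeas j
  have hSnn : ∀ ω, 0 ≤ (∑ j ∈ Finset.range k, Z j) ω := by
    intro ω
    rw [Finset.sum_apply]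
    exact Finset.sum_nonneg fun j _ => hZnn j ω
  have h_int : Integrable (fun ω => Real.exp (-κ * (∑ j ∈ Finset.range k, Z j) ω)) P := by
    refine ⟨((measurable_const.mul hSmeas).exp).aestronglyMeasurable,
      HasFiniteIntegral.of_bounded (C := 1) ?_⟩
    filter_upwards with ω
    rw [Real.norm_eq_abs, abs_of_pos (Real.exp_pos _)]
    rw [show (1 : ℝ) = Real.exp 0 from (Real.exp_zero).symm]
    exact Real.exp_le_exp.2 (mul_nonpos_of_nonpos_of_nonneg ht (hSnn ω))
  -- Chernoff bound
  have hcher := measure_le_le_exp_mul_mgf (X := ∑ j ∈ Finset.range k, Z j) (μ := P)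
    ((k : ℝ) / 2) ht h_int
  rw [hindep.mgf_sum hmeas (Finset.range k)] at hcher
  simp only [hmgf, Finset.prod_const, Finset.card_range] at hcher
  have hset_eq : {ω | (∑ j ∈ Finset.range k, Z j) ω ≤ (k : ℝ) / 2}
      = {ω | ∑ j ∈ Finset.range k, Z j ω ≤ (k : ℝ) / 2} := by
    ext ω; simp [Finset.sum_apply]
  rw [hset_eq] at hcher
  have hexp : Real.exp (-(-κ) * ((k : ℝ) / 2)) = Real.exp (κ / 2) ^ k := by
    rw [neg_neg, ← Real.exp_nat_mul]
    ring_nf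
  rw [hexp] at hcher
  -- key algebraic inequality
  have hkey : (K : ℝ) * Real.exp (κ / 2) * a ≤ 1 / 2 := by
    have h1 : Real.exp (κ / 2) * Real.exp (-κ) = Real.exp (-κ / 2) := by
      rw [← Real.exp_add]; ring_nf
    have hKnn : (0 : ℝ) ≤ K := Nat.cast_nonneg K
    have h2 : (K : ℝ) * Real.exp (κ / 2) * a
        = (K : ℝ) * (1 - ε) * Real.exp (-κ / 2) + (K : ℝ) * Real.exp (κ / 2) * ε := by
      rw [ha_def, ← h1]; ring
    rw [h2]
    have h3 : (K : ℝ) * (1 - ε) * Real.exp (-κ / 2) ≤ (K : ℝ) * Real.exp (-κ / 2) := by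
      have he := Real.exp_pos (-κ / 2)
      nlinarith [mul_nonneg (mul_nonneg hKnn hε0) he.le]
    linarith
  have hKone : (1 : ℝ) ≤ K := by exact_mod_cast hK
  have hpow2 : (2 : ℝ) ^ (-(k : ℝ)) = (1 / 2 : ℝ) ^ k := by
    rw [Real.rpow_neg (by norm_num), Real.rpow_natCast 2 k]
    simp [one_div, inv_pow]
  constructor
  · calc (K : ℝ) ^ (k - 1) *
        (P {ω | ∑ j ∈ Finset.range k, Z j ω ≤ (k : ℝ) / 2}).toReal
        ≤ (K : ℝ) ^ (k - 1) * (Real.exp (κ / 2) ^ k * a ^ k) := by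
          apply mul_le_mul_of_nonneg_left hcher (pow_nonneg (by linarith) _)
      _ ≤ (K : ℝ) ^ k * (Real.exp (κ / 2) ^ k * a ^ k) := by
          apply mul_le_mul_of_nonneg_right
            (pow_le_pow_right₀ hKone (Nat.sub_le k 1))
          exact mul_nonneg (pow_nonneg (Real.exp_pos _).le _) (pow_nonneg ha_nn _)
      _ = ((K : ℝ) * Real.exp (κ / 2) * a) ^ k := by rw [mul_pow, mul_pow]; ring
      _ ≤ (1 / 2 : ℝ) ^ k := by
          apply pow_le_pow_left₀ _ hkey
          exact mul_nonneg (mul_nonneg (Nat.cast_nonneg K) (Real.exp_pos _).le) ha_nn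
      _ = 2 ^ (-(k : ℝ)) := hpow2.symm
  · rw [hpow2]
    calc (1 / 2 : ℝ) ^ k ≤ (1 / 2 : ℝ) ^ 1 :=
        pow_le_pow_of_le_one (by norm_num) (by norm_num) hk
      _ = 1 / 2 := pow_one _
end

section
/- Let Π : (0,∞) → [0,1] and ε : (0,∞) → [0,∞) be functions with ε non-increasing and ε(α) → 0 as α → ∞. Let K > 0, λ > 0 and M > 0 satisfy: (a) K·Π(10α) ≤ (K·Π(α))² + λK²·ε(α) for all α > 0; (b) λK²·ε(M) ≤ 1/4; (c) K·Π(α) ≤ 1/2 for all α ∈ [M,10M]. Then Π(α) → 0 as α → ∞. -/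
/-!
With `f = K Π` and `g = λ K² ε`, the hypotheses say `f (10 α) ≤ f α ^ 2 + g α`. As long as
`g ≤ 1/4`, the bound `f ≤ 1/2` propagates from `[M, 10M]` to every scale `10ⁿ M`. Once
`f ≤ 1/2` we have `f ^ 2 ≤ f / 2`, so the recursion is a contraction `f (10 α) ≤ f α / 2 + g α`;
since `g → 0`, iterating it `n` times beyond the point where `g ≤ δ` gives `f ≤ 2⁻ⁿ⁻¹ + 2δ`.
-/

open Set Filter Topology

theorem forall_ge_of_forall_mem_Icc_of_mul {P : ℝ → Prop} {c M : ℝ} (hc : 1 < c) (hM : 0 < M)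
    (hbase : ∀ α ∈ Icc M (c * M), P α) (hstep : ∀ α ≥ M, P α → P (c * α)) :
    ∀ α ≥ M, P α := by
  have hc0 : 0 < c := by linarith
  have hscale : ∀ n : ℕ, ∀ α ∈ Icc M (c ^ n * M), P α := by
    intro n
    induction n with
    | zero =>
      rintro α ⟨hMα, hαM⟩
      exact hbase α ⟨hMα, by nlinarith⟩
    | succ n ih =>
      rintro α ⟨hMα, hα⟩
      rcases le_or_gt α (c * M) with hle | hlt
      · exact hbase α ⟨hMα, hle⟩
      · have hlower : M ≤ α / c := (le_div_iff₀ hc0).2 (by linarith)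
        have hupper : α / c ≤ c ^ n * M :=
          (div_le_iff₀ hc0).2 (by rw [pow_succ] at hα; linarith)
        simpa [mul_div_cancel₀ α hc0.ne'] using hstep (α / c) hlower (ih _ ⟨hlower, hupper⟩)
  intro α hα
  obtain ⟨n, hn⟩ := pow_unbounded_of_one_lt (α / M) hc
  exact hscale n α ⟨hα, ((div_lt_iff₀ hM).1 hn).le⟩

theorem le_half_of_le_sq_add {f g : ℝ → ℝ} {c M : ℝ} (hc : 1 < c) (hM : 0 < M)
    (hf : ∀ α ≥ M, 0 ≤ f α) (hrec : ∀ α ≥ M, f (c * α) ≤ f α ^ 2 + g α)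
    (hg : ∀ α ≥ M, g α ≤ 1 / 4) (hbase : ∀ α ∈ Icc M (c * M), f α ≤ 1 / 2) :
    ∀ α ≥ M, f α ≤ 1 / 2 := by
  refine forall_ge_of_forall_mem_Icc_of_mul hc hM hbase fun α hα hfα => ?_
  have hsq : f α ^ 2 ≤ (1 / 2) ^ 2 := pow_le_pow_left₀ (hf α hα) hfα 2
  linarith [hrec α hα, hg α hα]

theorem le_div_two_pow_add_of_le_half_add {f : ℝ → ℝ} {c A C δ : ℝ} (hc : 1 ≤ c) (hA : 0 ≤ A)
    (hδ : 0 ≤ δ) (hC : ∀ α ≥ A, f α ≤ C) (hrec : ∀ α ≥ A, f (c * α) ≤ f α / 2 + δ) (n : ℕ) :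
    ∀ α ≥ c ^ n * A, f α ≤ C / 2 ^ n + 2 * δ := by
  have hc0 : 0 < c := by linarith
  induction n with
  | zero =>
    intro α hα
    linarith [hC α (by simpa using hα)]
  | succ n ih =>
    intro α hα
    have hβ : c ^ n * A ≤ α / c := (le_div_iff₀ hc0).2 (by rw [pow_succ] at hα; linarith)
    have hβA : A ≤ α / c := le_trans (le_mul_of_one_le_left hA (one_le_pow₀ hc)) hβ
    calc f α = f (c * (α / c)) := by rw [mul_div_cancel₀ α hc0.ne']
      _ ≤ f (α / c) / 2 + δ := hrec _ hβA
      _ ≤ (C / 2 ^ n + 2 * δ) / 2 + δ := by linarith [ih _ hβ]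
      _ = C / 2 ^ (n + 1) + 2 * δ := by ring

theorem tendsto_zero_of_le_sq_add {f g : ℝ → ℝ} {c : ℝ} (hc : 1 ≤ c)
    (hf : ∀ᶠ α in atTop, f α ∈ Icc 0 (1 / 2))
    (hrec : ∀ᶠ α in atTop, f (c * α) ≤ f α ^ 2 + g α) (hg : Tendsto g atTop (𝓝 0)) :
    Tendsto f atTop (𝓝 0) := by
  refine tendsto_order.2 ⟨fun a ha => hf.mono fun α hα => ha.trans_le hα.1, fun η hη => ?_⟩
  have hη4 : 0 < η / 4 := by positivity
  obtain ⟨A, hA⟩ := eventually_atTop.1 (hf.and (hrec.and (hg.eventually_lt_const hη4)))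
  have hcontr : ∀ α ≥ max A 0, f (c * α) ≤ f α / 2 + η / 4 := by
    intro α hα
    obtain ⟨⟨hf0, hf1⟩, hrecα, hgα⟩ := hA α (le_of_max_le_left hα)
    nlinarith
  obtain ⟨n, hn⟩ := exists_pow_lt_of_lt_one hη (by norm_num : (1 / 2 : ℝ) < 1)
  filter_upwards [eventually_ge_atTop (c ^ n * max A 0)] with α hα
  have hbound := le_div_two_pow_add_of_le_half_add hc (le_max_right A 0) hη4.le
    (fun β hβ => (hA β (le_of_max_le_left hβ)).1.2) hcontr n α hα
  have hpow : (1 / 2 : ℝ) / 2 ^ n = (1 / 2) ^ n / 2 := by rw [div_pow, one_pow]; ring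
  linarith

theorem localisation_lemma_general (Pi : ℝ → ℝ) (ε : ℝ → ℝ)
    (hPi : ∀ α > (0 : ℝ), Pi α ∈ Icc (0 : ℝ) 1)
    (hεmono : ∀ α β : ℝ, 0 < α → α ≤ β → ε β ≤ ε α)
    (hεlim : Tendsto ε atTop (nhds 0))
    (K lam M : ℝ) (hK : 0 < K) (hlam : 0 < lam) (hM : 0 < M)
    (ha : ∀ α > (0 : ℝ), K * Pi (10 * α) ≤ (K * Pi α) ^ 2 + lam * K ^ 2 * ε α)
    (hb : lam * K ^ 2 * ε M ≤ 1 / 4)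
    (hc : ∀ α ∈ Icc M (10 * M), K * Pi α ≤ 1 / 2) :
    Tendsto Pi atTop (nhds 0) := by
  have hKPi0 : ∀ α > (0 : ℝ), 0 ≤ K * Pi α := fun α hα => mul_nonneg hK.le (hPi α hα).1
  have hsmall : ∀ α ≥ M, lam * K ^ 2 * ε α ≤ 1 / 4 := fun α hα =>
    (mul_le_mul_of_nonneg_left (hεmono M α hM hα) (by positivity)).trans hb
  have hhalf : ∀ α ≥ M, K * Pi α ≤ 1 / 2 :=
    le_half_of_le_sq_add (by norm_num : (1 : ℝ) < 10) hM (fun α hα => hKPi0 α (hM.trans_le hα))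
      (fun α hα => ha α (hM.trans_le hα)) hsmall hc
  have hKPi : Tendsto (fun α => K * Pi α) atTop (𝓝 0) := by
    refine tendsto_zero_of_le_sq_add (by norm_num : (1 : ℝ) ≤ 10) ?_
      ((eventually_gt_atTop 0).mono ha) (by simpa using hεlim.const_mul (lam * K ^ 2))
    filter_upwards [eventually_ge_atTop M] with α hα
    exact ⟨hKPi0 α (hM.trans_le hα), hhalf α hα⟩
  simpa [hK.ne'] using hKPi.const_mul K⁻¹

/-- The localisation/renormalisation lemma: from the recursive inequality
`K Π(10α) ≤ (K Π(α))² + λ K² ε(α)`, smallness of `λ K² ε(M)` and of `K Π` on `[M, 10M]`,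
one deduces `Π(α) → 0` as `α → ∞`. -/
theorem localisation_lemma (Pi : ℝ → ℝ) (ε : ℝ → ℝ)
    (hPi : ∀ α > (0 : ℝ), Pi α ∈ Icc (0 : ℝ) 1)
    (hε0 : ∀ α > (0 : ℝ), 0 ≤ ε α)
    (hεmono : ∀ α β : ℝ, 0 < α → α ≤ β → ε β ≤ ε α)
    (hεlim : Tendsto ε atTop (nhds 0))
    (K lam M : ℝ) (hK : 0 < K) (hlam : 0 < lam) (hM : 0 < M)
    (ha : ∀ α > (0 : ℝ), K * Pi (10 * α) ≤ (K * Pi α) ^ 2 + lam * K ^ 2 * ε α)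
    (hb : lam * K ^ 2 * ε M ≤ 1 / 4)
    (hc : ∀ α ∈ Icc M (10 * M), K * Pi α ≤ 1 / 2) :
    Tendsto Pi atTop (nhds 0) :=
  localisation_lemma_general Pi ε hPi hεmono hεlim K lam M hK hlam hM ha hb hc
end

section
/- Let ν be a probability measure on (0,∞) and d ≥ 1. If ∫_{(0,∞)} ν([r,∞))^{1/d} dr < ∞ then ∫_{(0,∞)} r^d ν(dr) < ∞. -/
/-!
Let `F t = ν [t, ∞)` and `C = ∫₀^∞ F^{1/p}`. As `F` is non-increasing,
`t F(t)^{1/p} ≤ ∫₀^t F^{1/p} ≤ C`, hence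
`t^{p-1} F(t) = (t F(t)^{1/p})^{p-1} F(t)^{1/p} ≤ C^{p-1} F(t)^{1/p}`.
Integrating this in the layer-cake formula `∫ r^p dν = p ∫₀^∞ t^{p-1} F(t) dt` gives
`∫ r^p dν ≤ p C^p`.
-/

open MeasureTheory Set
open scoped ENNReal

theorem ENNReal.mul_rpow_sub_one_le_of_mul_rpow_inv_le {p : ℝ} (hp : 1 ≤ p) {x y c : ℝ≥0∞}
    (h : x * y ^ p⁻¹ ≤ c) : y * x ^ (p - 1) ≤ c ^ (p - 1) * y ^ p⁻¹ := by
  have hp₀ : 0 < p := by linarith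
  have hy : y = y ^ p⁻¹ * (y ^ p⁻¹) ^ (p - 1) := by
    rw [← ENNReal.rpow_mul, ← ENNReal.rpow_add_of_nonneg _ _ (by positivity)
      (mul_nonneg (by positivity) (by linarith)),
      show p⁻¹ + p⁻¹ * (p - 1) = 1 by field_simp; ring, ENNReal.rpow_one]
  calc y * x ^ (p - 1) = (x * y ^ p⁻¹) ^ (p - 1) * y ^ p⁻¹ := by
        rw [ENNReal.mul_rpow_of_nonneg _ _ (by linarith)]
        nth_rewrite 1 [hy]
        ring
    _ ≤ c ^ (p - 1) * y ^ p⁻¹ := by gcongr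

theorem Antitone.ofReal_mul_le_setLIntegral_Ioi {g : ℝ → ℝ≥0∞} (hg : Antitone g) (t : ℝ) :
    ENNReal.ofReal t * g t ≤ ∫⁻ u in Ioi 0, g u :=
  calc ENNReal.ofReal t * g t = ∫⁻ _ in Ioc 0 t, g t := by
        rw [setLIntegral_const, Real.volume_Ioc, sub_zero, mul_comm]
    _ ≤ ∫⁻ u in Ioc 0 t, g u := setLIntegral_mono' measurableSet_Ioc fun _ hu ↦ hg hu.2
    _ ≤ ∫⁻ u in Ioi 0, g u := lintegral_mono_set Ioc_subset_Ioi_self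

theorem lintegral_ofReal_rpow_le_of_nonneg {μ : Measure ℝ} (hμ : 0 ≤ᵐ[μ] id) {p : ℝ}
    (hp : 1 ≤ p) :
    ∫⁻ r, ENNReal.ofReal (r ^ p) ∂μ ≤
      ENNReal.ofReal p * (∫⁻ t in Ioi 0, μ (Ici t) ^ p⁻¹) ^ p := by
  set C := ∫⁻ t in Ioi 0, μ (Ici t) ^ p⁻¹
  have hanti : Antitone fun t ↦ μ (Ici t) ^ p⁻¹ := fun s t hst ↦
    ENNReal.rpow_le_rpow (measure_mono (Ici_subset_Ici.2 hst)) (by positivity)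
  have tail_bound : ∀ t ∈ Ioi (0 : ℝ),
      μ {a | t ≤ a} * ENNReal.ofReal (t ^ (p - 1)) ≤ C ^ (p - 1) * μ (Ici t) ^ p⁻¹ := by
    intro t ht
    rw [← ENNReal.ofReal_rpow_of_nonneg (le_of_lt ht) (by linarith)]
    exact ENNReal.mul_rpow_sub_one_le_of_mul_rpow_inv_le hp
      (hanti.ofReal_mul_le_setLIntegral_Ioi t)
  have hC : C ^ (p - 1) * C = C ^ p := by
    conv_rhs => rw [← sub_add_cancel p 1,
      ENNReal.rpow_add_of_nonneg _ _ (by linarith) zero_le_one, ENNReal.rpow_one]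
  calc ∫⁻ r, ENNReal.ofReal (r ^ p) ∂μ
      = ENNReal.ofReal p * ∫⁻ t in Ioi 0, μ {a | t ≤ a} * ENNReal.ofReal (t ^ (p - 1)) :=
        lintegral_rpow_eq_lintegral_meas_le_mul μ hμ aemeasurable_id (by linarith)
    _ ≤ ENNReal.ofReal p * ∫⁻ t in Ioi 0, C ^ (p - 1) * μ (Ici t) ^ p⁻¹ :=
        mul_le_mul_right (setLIntegral_mono (hanti.measurable.const_mul _) tail_bound) _
    _ = ENNReal.ofReal p * C ^ p := by rw [lintegral_const_mul _ hanti.measurable, hC]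

theorem moment_of_greedy_condition_general (d : ℕ) (hd : 1 ≤ d)
    (ν : Measure ℝ) (hsupp : ν (Iic 0) = 0)
    (h : ∫⁻ r in Ioi (0 : ℝ), (ν (Ici r)) ^ (1 / (d : ℝ)) < ⊤) :
    ∫⁻ r, ENNReal.ofReal (r ^ d) ∂ν < ⊤ := by
  have hν : 0 ≤ᵐ[ν] id :=
    ae_iff.2 <| measure_mono_null (fun _ hx ↦ le_of_lt (not_le.1 hx)) hsupp
  have hd' : (1 : ℝ) ≤ d := by exact_mod_cast hd
  rw [one_div] at h
  calc ∫⁻ r, ENNReal.ofReal (r ^ d) ∂ν = ∫⁻ r, ENNReal.ofReal (r ^ (d : ℝ)) ∂ν := by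
        simp only [Real.rpow_natCast]
    _ ≤ ENNReal.ofReal d * (∫⁻ t in Ioi 0, ν (Ici t) ^ (d : ℝ)⁻¹) ^ (d : ℝ) :=
        lintegral_ofReal_rpow_le_of_nonneg hν hd'
    _ < ⊤ := ENNReal.mul_lt_top ENNReal.ofReal_lt_top
        (ENNReal.rpow_lt_top_of_nonneg (by positivity) h.ne)

/-- The greedy-paths integrability condition implies the `d`-th moment condition:
if `∫ ν([r,∞))^{1/d} dr < ∞` then `∫ r^d ν(dr) < ∞`. -/
theorem moment_of_greedy_condition (d : ℕ) (hd : 1 ≤ d)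
    (ν : Measure ℝ) [IsProbabilityMeasure ν] (hsupp : ν (Iic 0) = 0)
    (h : ∫⁻ r in Ioi (0 : ℝ), (ν (Ici r)) ^ (1 / (d : ℝ)) < ⊤) :
    ∫⁻ r, ENNReal.ofReal (r ^ d) ∂ν < ⊤ :=
  moment_of_greedy_condition_general d hd ν hsupp h
end

section
/- Let ν be a probability measure on (0,∞), d ≥ 1 and ε > 0. If ∫_{(0,∞)} r^d (log(max(r,1)))^{d−1+ε} ν(dr) < ∞ then ∫_{(0,∞)} ν([r,∞))^{1/d} dr < ∞. -/
open MeasureTheory Set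
open scoped ENNReal NNReal

private lemma young_ennreal (a b : ℝ≥0∞) {s t : ℝ} (hs : 0 < s) (ht : 0 < t)
    (hst : s + t = 1) : a ^ s * b ^ t ≤ a + b := by
  have h1 : a ^ s * b ^ t ≤ max a b ^ s * max a b ^ t :=
    mul_le_mul' (ENNReal.rpow_le_rpow (le_max_left a b) hs.le)
      (ENNReal.rpow_le_rpow (le_max_right a b) ht.le)
  refine h1.trans ?_
  have hmab : max a b ≤ a + b := max_le le_self_add le_add_self
  rcases eq_or_ne (max a b) 0 with h0 | h0
  · simp [h0, ENNReal.zero_rpow_of_pos hs]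
  rcases eq_or_ne (max a b) ⊤ with htop | htop
  · rw [htop, ENNReal.top_rpow_of_pos hs, ENNReal.top_rpow_of_pos ht, ENNReal.top_mul_top]
    exact htop ▸ hmab
  · rw [← ENNReal.rpow_add s t h0 htop, hst, ENNReal.rpow_one]
    exact hmab

/-- The log-moment condition implies the greedy-paths integrability condition:
if `∫ r^d (log_+ r)^{d-1+ε} ν(dr) < ∞` then `∫ ν([r,∞))^{1/d} dr < ∞`. -/
theorem greedy_of_log_moment (d : ℕ) (hd : 1 ≤ d) (ε : ℝ) (hε : 0 < ε)
    (ν : Measure ℝ) [IsProbabilityMeasure ν] (hsupp : ν (Iic 0) = 0)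
    (h : ∫⁻ r, ENNReal.ofReal
        (r ^ d * Real.log (max r 1) ^ ((d : ℝ) - 1 + ε)) ∂ν < ⊤) :
    ∫⁻ r in Ioi (0 : ℝ), (ν (Ici r)) ^ (1 / (d : ℝ)) < ⊤ := by
  have hd0 : (0:ℝ) < d := by exact_mod_cast hd
  have hd1R : (1:ℝ) ≤ d := by exact_mod_cast hd
  set E : ℝ := Real.exp 1 with hE
  have hE1 : (1:ℝ) < E := by
    rw [hE]
    have := Real.exp_one_gt_d9
    linarith
  have hE0 : (0:ℝ) < E := lt_trans one_pos hE1
  set a : ℝ := (d:ℝ) - 1 + ε with ha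
  have ha0 : 0 ≤ a := by rw [ha]; linarith
  set g : ℝ → ℝ := fun r => r ^ (d-1) * Real.log r ^ a with hg
  have hgm : Measurable g := (measurable_id.pow_const _).mul (Real.measurable_log.pow_const a)
  set F : ℝ → ℝ≥0∞ := fun r => ν (Ici r) with hF
  have hFm : Measurable F :=
    Antitone.measurable (fun r s hrs => measure_mono (Ici_subset_Ici.mpr hrs))
  have hF1 : ∀ r, F r ≤ 1 := fun r => prob_le_one
  -- Lemma A: the weighted tail integral is controlled by the moment.
  have key : ∫⁻ r in Ioi E, ENNReal.ofReal (g r) * F r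
      ≤ ∫⁻ x, ENNReal.ofReal (x ^ d * Real.log (max x 1) ^ a) ∂ν := by
    have step1 : ∀ r : ℝ, ENNReal.ofReal (g r) * F r
        = ∫⁻ x, (if r ≤ x then ENNReal.ofReal (g r) else 0) ∂ν := by
      intro r
      rw [hF, ← lintegral_indicator_const measurableSet_Ici]
      refine lintegral_congr fun x => ?_
      simp [Set.indicator_apply, mem_Ici]
    calc ∫⁻ r in Ioi E, ENNReal.ofReal (g r) * F r
        = ∫⁻ r in Ioi E, ∫⁻ x, (if r ≤ x then ENNReal.ofReal (g r) else 0) ∂ν :=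
          lintegral_congr fun r => step1 r
      _ = ∫⁻ x, (∫⁻ r in Ioi E, if r ≤ x then ENNReal.ofReal (g r) else 0) ∂ν := by
          have hm : AEMeasurable (Function.uncurry fun (r x : ℝ) =>
              if r ≤ x then ENNReal.ofReal (g r) else 0)
              ((volume.restrict (Ioi E)).prod ν) := by
            apply Measurable.aemeasurable
            rw [Function.uncurry_def]
            exact Measurable.ite (measurableSet_le measurable_fst measurable_snd)
              ((ENNReal.measurable_ofReal.comp hgm).comp measurable_fst) measurable_const
          exact lintegral_lintegral_swap (μ := volume.restrict (Ioi E)) (ν := ν) hm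
      _ ≤ ∫⁻ x, ENNReal.ofReal (x ^ d * Real.log (max x 1) ^ a) ∂ν := by
          apply lintegral_mono
          intro x
          dsimp only
          have hre : ∫⁻ r in Ioi E, (if r ≤ x then ENNReal.ofReal (g r) else 0)
              = ∫⁻ r in Ioc E x, ENNReal.ofReal (g r) := by
            have : ∀ r : ℝ, (if r ≤ x then ENNReal.ofReal (g r) else 0)
                = (Iic x).indicator (fun r => ENNReal.ofReal (g r)) r := by
              intro r; simp [Set.indicator_apply, mem_Iic]
            simp_rw [this]
            rw [lintegral_indicator measurableSet_Iic,
              Measure.restrict_restrict measurableSet_Iic]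
            congr 1
            rw [Set.Iic_inter_Ioi]
          rw [hre]
          rcases le_or_gt x E with hxE | hxE
          · rw [Ioc_eq_empty (by exact not_lt.mpr hxE), Measure.restrict_empty,
              lintegral_zero_measure]
            exact zero_le
          · have hx1 : (1:ℝ) < x := hE1.trans hxE
            have hlx : 0 ≤ Real.log x := Real.log_nonneg hx1.le
            have hbound : ∀ r ∈ Ioc E x,
                ENNReal.ofReal (g r) ≤ ENNReal.ofReal (x ^ (d-1) * Real.log x ^ a) := by
              intro r hr
              apply ENNReal.ofReal_le_ofReal
              have hr1 : (1:ℝ) < r := hE1.trans hr.1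
              have h0r : (0:ℝ) < r := lt_trans one_pos hr1
              have hlr : 0 ≤ Real.log r := Real.log_nonneg hr1.le
              exact mul_le_mul (pow_le_pow_left₀ h0r.le hr.2 _)
                (Real.rpow_le_rpow hlr (Real.log_le_log h0r hr.2) ha0)
                (Real.rpow_nonneg hlr a) (pow_nonneg (by linarith) _)
            calc ∫⁻ r in Ioc E x, ENNReal.ofReal (g r)
                ≤ ∫⁻ _ in Ioc E x, ENNReal.ofReal (x ^ (d-1) * Real.log x ^ a) :=
                  setLIntegral_mono' measurableSet_Ioc hbound
              _ = ENNReal.ofReal (x ^ (d-1) * Real.log x ^ a) * volume (Ioc E x) :=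
                  setLIntegral_const _ _
              _ ≤ ENNReal.ofReal (x ^ (d-1) * Real.log x ^ a) * ENNReal.ofReal x := by
                  gcongr
                  rw [Real.volume_Ioc]
                  exact ENNReal.ofReal_le_ofReal (by linarith)
              _ = ENNReal.ofReal (x ^ d * Real.log (max x 1) ^ a) := by
                  rw [← ENNReal.ofReal_mul
                    (mul_nonneg (pow_nonneg (by linarith) _) (Real.rpow_nonneg hlx a))]
                  congr 1
                  have hdd : d - 1 + 1 = d := Nat.succ_pred_eq_of_pos hd
                  rw [max_eq_left hx1.le, mul_right_comm, ← pow_succ, hdd]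
  have hA : ∫⁻ r in Ioi E, ENNReal.ofReal (g r) * F r < ⊤ := lt_of_le_of_lt key h
  -- split the goal at E
  have hsplit : Ioi (0:ℝ) = Ioc 0 E ∪ Ioi E := (Ioc_union_Ioi_eq_Ioi hE0.le).symm
  rw [hsplit, lintegral_union measurableSet_Ioi Ioc_disjoint_Ioi_same]
  refine ENNReal.add_lt_top.mpr ⟨?_, ?_⟩
  · calc ∫⁻ r in Ioc (0:ℝ) E, F r ^ (1/(d:ℝ))
        ≤ ∫⁻ _ in Ioc (0:ℝ) E, 1 :=
          setLIntegral_mono' measurableSet_Ioc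
            (fun r _ => ENNReal.rpow_le_one (hF1 r) (by positivity))
      _ = 1 * volume (Ioc (0:ℝ) E) := setLIntegral_const _ _
      _ < ⊤ := by rw [one_mul, Real.volume_Ioc]; exact ENNReal.ofReal_lt_top
  -- main part
  rcases eq_or_lt_of_le hd with hd1 | hd2
  · -- d = 1
    subst hd1
    have : ∀ r ∈ Ioi E, F r ^ (1/((1:ℕ):ℝ)) ≤ ENNReal.ofReal (g r) * F r := by
      intro r hr
      have h0r : (0:ℝ) < r := lt_trans hE0 hr
      have hlr : 1 ≤ Real.log r := (Real.le_log_iff_exp_le h0r).mpr hr.le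
      have hg1 : (1:ℝ) ≤ g r := by
        rw [hg]
        simp only [Nat.sub_self, pow_zero, one_mul]
        calc (1:ℝ) = 1 ^ a := (Real.one_rpow a).symm
          _ ≤ Real.log r ^ a := Real.rpow_le_rpow zero_le_one hlr ha0
      have h1 : 1 ≤ ENNReal.ofReal (g r) := ENNReal.one_le_ofReal.mpr hg1
      calc F r ^ (1/((1:ℕ):ℝ)) = F r := by norm_num
        _ = 1 * F r := (one_mul _).symm
        _ ≤ ENNReal.ofReal (g r) * F r := mul_le_mul' h1 le_rfl
    exact lt_of_le_of_lt (setLIntegral_mono' measurableSet_Ioi this) hA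
  · -- 2 ≤ d
    have hc : (0:ℝ) < (d:ℝ) - 1 := by
      have : (2:ℝ) ≤ d := by exact_mod_cast hd2
      linarith
    set c : ℝ := (d:ℝ) - 1 with hc'
    set p : ℝ := a / c with hp'
    have hp1 : 1 < p := by
      rw [hp', ha]
      rw [lt_div_iff₀ hc]
      linarith
    -- integrability of r⁻¹ (log r)^(-p) on (E, ∞)
    have hint : IntegrableOn (fun x : ℝ => x⁻¹ * Real.log x ^ (-p)) (Ioi E) := by
      have hderiv : ∀ x ∈ Ici E,
          HasDerivAt (fun y : ℝ => Real.log y ^ (1-p) / (1-p))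
            (x⁻¹ * Real.log x ^ (-p)) x := by
        intro x hx
        have hx0 : (0:ℝ) < x := lt_of_lt_of_le hE0 hx
        have hlx : 1 ≤ Real.log x := (Real.le_log_iff_exp_le hx0).mpr hx
        have h1 : HasDerivAt Real.log x⁻¹ x := Real.hasDerivAt_log hx0.ne'
        have h2 : HasDerivAt (fun y : ℝ => Real.log y ^ (1-p))
            (x⁻¹ * (1-p) * Real.log x ^ (1-p-1)) x :=
          h1.rpow_const (Or.inl (by linarith))
        have h3 := h2.div_const (1-p)
        refine h3.congr_deriv ?_
        have hne : (1:ℝ) - p ≠ 0 := by linarith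
        have he : 1 - p - 1 = -p := by ring
        rw [he]
        field_simp
      have hnonneg : ∀ x ∈ Ioi E, 0 ≤ x⁻¹ * Real.log x ^ (-p) := by
        intro x hx
        have hx0 : (0:ℝ) < x := lt_trans hE0 hx
        have hlx : 0 ≤ Real.log x := Real.log_nonneg (hE1.trans hx).le
        exact mul_nonneg (inv_nonneg.mpr hx0.le) (Real.rpow_nonneg hlx _)
      have htend : Filter.Tendsto (fun y : ℝ => Real.log y ^ (1-p) / (1-p))
          Filter.atTop (nhds 0) := by
        have h1 : Filter.Tendsto (fun y : ℝ => y ^ (1-p)) Filter.atTop (nhds 0) := by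
          have := tendsto_rpow_neg_atTop (by linarith : (0:ℝ) < p - 1)
          simpa [neg_sub] using this
        have h2 := (h1.comp Real.tendsto_log_atTop).div_const (1-p)
        simpa using h2
      exact integrableOn_Ioi_deriv_of_nonneg' hderiv hnonneg htend
    have hB : ∫⁻ r in Ioi E, ENNReal.ofReal (r⁻¹ * Real.log r ^ (-p)) < ⊤ :=
      hint.lintegral_lt_top
    -- pointwise bound
    have hpoint : ∀ r ∈ Ioi E, F r ^ (1/(d:ℝ))
        ≤ ENNReal.ofReal (g r) * F r + ENNReal.ofReal (r⁻¹ * Real.log r ^ (-p)) := by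
      intro r hr
      have hr1 : (1:ℝ) < r := hE1.trans hr
      have h0r : (0:ℝ) < r := lt_trans one_pos hr1
      have hL : 1 ≤ Real.log r := (Real.le_log_iff_exp_le h0r).mpr hr.le
      have hL0 : (0:ℝ) < Real.log r := lt_of_lt_of_le one_pos hL
      have hgpos : 0 < g r := by
        rw [hg]
        exact mul_pos (pow_pos h0r _) (Real.rpow_pos_of_pos hL0 a)
      set G : ℝ≥0∞ := ENNReal.ofReal (g r) with hG
      have hG0 : G ≠ 0 := by
        rw [hG]
        exact (ENNReal.ofReal_pos.mpr hgpos).ne'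
      have hGt : G ≠ ⊤ := ENNReal.ofReal_ne_top
      have hgr : g r ^ (-(1/c)) = r⁻¹ * Real.log r ^ (-p) := by
        rw [hg]
        rw [Real.mul_rpow (pow_nonneg h0r.le _) (Real.rpow_nonneg hL0.le a)]
        congr 1
        · rw [← Real.rpow_natCast r (d-1), ← Real.rpow_mul h0r.le]
          have : ((d-1 : ℕ):ℝ) * (-(1/c)) = -1 := by
            rw [Nat.cast_sub hd, Nat.cast_one, ← hc']
            field_simp
          rw [this, Real.rpow_neg_one]
        · rw [← Real.rpow_mul hL0.le]
          congr 1
          rw [hp']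
          field_simp
      have hgeq : ENNReal.ofReal (r⁻¹ * Real.log r ^ (-p)) = G ^ (-(1/c)) := by
        rw [hG, ENNReal.ofReal_rpow_of_pos hgpos, hgr]
      rw [hgeq]
      have hkey : F r ^ (1/(d:ℝ)) = (G * F r) ^ (1/(d:ℝ)) * (G ^ (-(1/c))) ^ (c/(d:ℝ)) := by
        have h1 : (G ^ (-(1/c))) ^ (c/(d:ℝ)) = G ^ (-(1/(d:ℝ))) := by
          rw [← ENNReal.rpow_mul]
          congr 1
          field_simp
        rw [h1, ENNReal.mul_rpow_of_nonneg _ _ (by positivity), mul_right_comm,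
          ← ENNReal.rpow_add _ _ hG0 hGt]
        simp
      rw [hkey]
      exact young_ennreal _ _ (by positivity) (by positivity)
        (by rw [hc']; field_simp; ring)
    calc ∫⁻ r in Ioi E, F r ^ (1/(d:ℝ))
        ≤ ∫⁻ r in Ioi E,
            (ENNReal.ofReal (g r) * F r + ENNReal.ofReal (r⁻¹ * Real.log r ^ (-p))) :=
          setLIntegral_mono' measurableSet_Ioi hpoint
      _ = (∫⁻ r in Ioi E, ENNReal.ofReal (g r) * F r)
            + ∫⁻ r in Ioi E, ENNReal.ofReal (r⁻¹ * Real.log r ^ (-p)) :=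
          lintegral_add_left ((ENNReal.measurable_ofReal.comp hgm).mul hFm) _
      _ < ⊤ := ENNReal.add_lt_top.mpr ⟨hA, hB⟩
end

section
/- Suppose T : ℝ^d × ℝ^d → [0,∞) satisfies T(a,b) ≤ ‖a − b‖ and the triangle inequality, and suppose that for a constant μ ≥ 0 and for every x in a finite ε-net A of the unit sphere S(1) we have: for all n ≥ N, |T(0,nx)/n − μ| ≤ ε. Then for every y ∈ ℝ^d with n(y) := ⌊‖y‖⌋ ≥ max(N, 1/ε), one has |T(0,y) − n(y)·μ| ≤ 3ε·n(y). -/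
/-!
Write `n = ⌊‖y‖⌋` and pick `x ∈ A` within `ε` of `y / ‖y‖`. Since `T` is bounded by the
distance and satisfies the triangle inequality, `T 0 ·` is `1`-Lipschitz, so `T 0 y` differs
from `T 0 (n x)` by at most `‖y - n x‖ ≤ 1 + n ε`, while `T 0 (n x)` is within `n ε` of `n μ`.
The condition `n ε ≥ 1` absorbs the rounding error `1` into `ε n`.
-/

open Metric NormedSpace

lemma abs_sub_le_norm_sub_of_le_norm_sub {E : Type*} [SeminormedAddCommGroup E]
    {T : E → E → ℝ} (hub : ∀ a b, T a b ≤ ‖a - b‖) (htri : ∀ a b c, T a c ≤ T a b + T b c)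
    (a b c : E) : |T a b - T a c| ≤ ‖b - c‖ := by
  have hbc := hub b c
  have hcb := hub c b
  rw [norm_sub_rev] at hcb
  rw [abs_sub_le_iff]
  constructor <;> linarith [htri a c b, htri a b c]

lemma norm_sub_floor_norm_smul_le {V : Type*} [NormedAddCommGroup V] [NormedSpace ℝ V]
    (y x : V) : ‖y - (⌊‖y‖⌋₊ : ℝ) • x‖ ≤ 1 + (⌊‖y‖⌋₊ : ℝ) * ‖normalize y - x‖ := by
  set n : ℝ := ((⌊‖y‖⌋₊ : ℕ) : ℝ)
  have hn : 0 ≤ n := Nat.cast_nonneg _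
  have hround : |‖y‖ - n| ≤ 1 := by
    rw [abs_le]
    constructor <;> linarith [Nat.floor_le (norm_nonneg y), Nat.lt_floor_add_one ‖y‖]
  have hunit : ‖normalize y‖ ≤ 1 := by
    by_cases hy : y = 0
    · simp [hy]
    · exact (norm_normalize hy).le
  have hsplit : y - n • x = (‖y‖ - n) • normalize y + n • (normalize y - x) := by
    rw [smul_sub, sub_smul, norm_smul_normalize]
    abel
  calc ‖y - n • x‖ ≤ ‖(‖y‖ - n) • normalize y‖ + ‖n • (normalize y - x)‖ := by
        rw [hsplit]; exact norm_add_le _ _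
    _ ≤ 1 * 1 + n * ‖normalize y - x‖ := by
        rw [norm_smul, norm_smul, Real.norm_eq_abs, Real.norm_of_nonneg hn]
        gcongr
    _ = 1 + n * ‖normalize y - x‖ := by ring

theorem uniform_convergence_core_general {d : ℕ}
    (T : EuclideanSpace ℝ (Fin d) → EuclideanSpace ℝ (Fin d) → ℝ)
    (hub : ∀ a b, T a b ≤ ‖a - b‖)
    (htri : ∀ a b c, T a c ≤ T a b + T b c)
    (μ ε : ℝ)
    (A : Finset (EuclideanSpace ℝ (Fin d)))
    (hnet : ∀ z ∈ sphere (0 : EuclideanSpace ℝ (Fin d)) 1, ∃ x ∈ A, ‖z - x‖ ≤ ε)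
    (N : ℕ)
    (hconv : ∀ x ∈ A, ∀ n : ℕ, N ≤ n → |T 0 ((n : ℝ) • x) / n - μ| ≤ ε)
    (y : EuclideanSpace ℝ (Fin d))
    (hN : N ≤ ⌊‖y‖⌋₊) (hNε : 1 ≤ (⌊‖y‖⌋₊ : ℝ) * ε) :
    |T 0 y - (⌊‖y‖⌋₊ : ℝ) * μ| ≤ 3 * ε * (⌊‖y‖⌋₊ : ℝ) := by
  set n := ⌊‖y‖⌋₊
  have hn : (0 : ℝ) < n := Nat.cast_pos.2 (Nat.pos_of_ne_zero fun h ↦ by norm_num [h] at hNε)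
  have hy : y ≠ 0 := by
    rintro rfl
    simp [n] at hn
  obtain ⟨x, hxA, hxy⟩ := hnet (normalize y) (mem_sphere_zero_iff_norm.2 (norm_normalize hy))
  have hradial : |T 0 ((n : ℝ) • x) - n * μ| ≤ n * ε := by
    have hscale : T 0 ((n : ℝ) • x) - n * μ = n * (T 0 ((n : ℝ) • x) / n - μ) := by
      field_simp
    rw [hscale, abs_mul, abs_of_pos hn]
    exact mul_le_mul_of_nonneg_left (hconv x hxA n hN) hn.le
  calc |T 0 y - n * μ|
      ≤ |T 0 y - T 0 ((n : ℝ) • x)| + |T 0 ((n : ℝ) • x) - n * μ| := abs_sub_le _ _ _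
    _ ≤ (1 + n * ε) + n * ε := by
        gcongr
        calc |T 0 y - T 0 ((n : ℝ) • x)| ≤ ‖y - (n : ℝ) • x‖ :=
              abs_sub_le_norm_sub_of_le_norm_sub hub htri 0 y _
          _ ≤ 1 + n * ‖normalize y - x‖ := norm_sub_floor_norm_smul_le y x
          _ ≤ 1 + n * ε := by gcongr
    _ ≤ 3 * ε * n := by linarith

/-- The deterministic core of uniform convergence in Theorem 1: if `T` is subadditive,
nonnegative, bounded by the distance, and `T(0, n x)/n` is `ε`-close to `μ` for all `n ≥ N`
and all `x` in a finite `ε`-net `A` of the unit sphere, then for any `y` with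
`n(y) = ⌊‖y‖⌋ ≥ max(N, 1/ε)` one has `|T(0,y) − n(y) μ| ≤ 3 ε n(y)`. -/
theorem uniform_convergence_core {d : ℕ}
    (T : EuclideanSpace ℝ (Fin d) → EuclideanSpace ℝ (Fin d) → ℝ)
    (hnn : ∀ a b, 0 ≤ T a b)
    (hub : ∀ a b, T a b ≤ ‖a - b‖)
    (htri : ∀ a b c, T a c ≤ T a b + T b c)
    (μ ε : ℝ) (hμ : 0 ≤ μ) (hε : 0 < ε)
    (A : Finset (EuclideanSpace ℝ (Fin d)))
    (hA : (A : Set (EuclideanSpace ℝ (Fin d))) ⊆ sphere (0 : EuclideanSpace ℝ (Fin d)) 1)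
    (hnet : ∀ z ∈ sphere (0 : EuclideanSpace ℝ (Fin d)) 1, ∃ x ∈ A, ‖z - x‖ ≤ ε)
    (N : ℕ)
    (hconv : ∀ x ∈ A, ∀ n : ℕ, N ≤ n → |T 0 ((n : ℝ) • x) / n - μ| ≤ ε)
    (y : EuclideanSpace ℝ (Fin d)) (hy : y ≠ 0)
    (hN : N ≤ ⌊‖y‖⌋₊) (hNε : 1 ≤ (⌊‖y‖⌋₊ : ℝ) * ε) :
    |T 0 y - (⌊‖y‖⌋₊ : ℝ) * μ| ≤ 3 * ε * (⌊‖y‖⌋₊ : ℝ) :=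
  uniform_convergence_core_general T hub htri μ ε A hnet N hconv y hN hNε
end
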